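/- arXiv:1911.02843 — 3 statements merged into one kernel-verified Lean document; each statement's English description precedes it below -/
import Mathlib

section
/- For purely imaginary octonions x, y with |x| = 1 and ⟨x, y⟩ = 0, one has x × (x × y) = -y. In particular, for each point p of the unit sphere S^6 in the purely imaginary octonions, the map J_p(U) = p × U defines an almost complex structure (J_p² = -Id) on the orthogonal complement of p in the purely imaginary octonions. -/
/-!
Purely imaginary octonions are identified with `Fin 7 → ℝ` via the standard
basis `e₁, …, e₇` of the imaginary part of the Cayley numbers `ℝ⁸`.
`octCross x y` is the imaginary part of the octonion product `x · y`
(so that `x · y = ⟨x,y⟩ e₀ + x × y`), given by the standard multiplication table.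
`octDot` is the Euclidean inner product.
-/

noncomputable def octCross (x y : Fin 7 → ℝ) : Fin 7 → ℝ :=
  ![ x 1 * y 2 - x 2 * y 1 + x 3 * y 4 - x 4 * y 3 + x 5 * y 6 - x 6 * y 5,
     -(x 0 * y 2) + x 2 * y 0 + x 3 * y 5 - x 5 * y 3 - x 4 * y 6 + x 6 * y 4,
     x 0 * y 1 - x 1 * y 0 - x 3 * y 6 + x 6 * y 3 - x 4 * y 5 + x 5 * y 4,
     -(x 0 * y 4) + x 4 * y 0 - x 1 * y 5 + x 5 * y 1 + x 2 * y 6 - x 6 * y 2,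
     x 0 * y 3 - x 3 * y 0 + x 1 * y 6 - x 6 * y 1 + x 2 * y 5 - x 5 * y 2,
     -(x 0 * y 6) + x 6 * y 0 + x 1 * y 3 - x 3 * y 1 - x 2 * y 4 + x 4 * y 2,
     x 0 * y 5 - x 5 * y 0 - x 1 * y 4 + x 4 * y 1 - x 2 * y 3 + x 3 * y 2 ]

noncomputable def octDot (x y : Fin 7 → ℝ) : ℝ := ∑ i, x i * y i

lemma octCross_key (x y : Fin 7 → ℝ) (h1 : octDot x x = 1) (h2 : octDot x y = 0) :
    octCross x (octCross x y) = -y := by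
  simp only [octDot, Fin.sum_univ_seven] at h1 h2
  have c0 : octCross x y 0 = x 1 * y 2 - x 2 * y 1 + x 3 * y 4 - x 4 * y 3 + x 5 * y 6 - x 6 * y 5 := rfl
  have c1 : octCross x y 1 = -(x 0 * y 2) + x 2 * y 0 + x 3 * y 5 - x 5 * y 3 - x 4 * y 6 + x 6 * y 4 := rfl
  have c2 : octCross x y 2 = x 0 * y 1 - x 1 * y 0 - x 3 * y 6 + x 6 * y 3 - x 4 * y 5 + x 5 * y 4 := rfl
  have c3 : octCross x y 3 = -(x 0 * y 4) + x 4 * y 0 - x 1 * y 5 + x 5 * y 1 + x 2 * y 6 - x 6 * y 2 := rfl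
  have c4 : octCross x y 4 = x 0 * y 3 - x 3 * y 0 + x 1 * y 6 - x 6 * y 1 + x 2 * y 5 - x 5 * y 2 := rfl
  have c5 : octCross x y 5 = -(x 0 * y 6) + x 6 * y 0 + x 1 * y 3 - x 3 * y 1 - x 2 * y 4 + x 4 * y 2 := rfl
  have c6 : octCross x y 6 = x 0 * y 5 - x 5 * y 0 - x 1 * y 4 + x 4 * y 1 - x 2 * y 3 + x 3 * y 2 := rfl
  have d0 : octCross x (octCross x y) 0 = x 1 * octCross x y 2 - x 2 * octCross x y 1 + x 3 * octCross x y 4 - x 4 * octCross x y 3 + x 5 * octCross x y 6 - x 6 * octCross x y 5 := rfl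
  have d1 : octCross x (octCross x y) 1 = -(x 0 * octCross x y 2) + x 2 * octCross x y 0 + x 3 * octCross x y 5 - x 5 * octCross x y 3 - x 4 * octCross x y 6 + x 6 * octCross x y 4 := rfl
  have d2 : octCross x (octCross x y) 2 = x 0 * octCross x y 1 - x 1 * octCross x y 0 - x 3 * octCross x y 6 + x 6 * octCross x y 3 - x 4 * octCross x y 5 + x 5 * octCross x y 4 := rfl
  have d3 : octCross x (octCross x y) 3 = -(x 0 * octCross x y 4) + x 4 * octCross x y 0 - x 1 * octCross x y 5 + x 5 * octCross x y 1 + x 2 * octCross x y 6 - x 6 * octCross x y 2 := rfl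
  have d4 : octCross x (octCross x y) 4 = x 0 * octCross x y 3 - x 3 * octCross x y 0 + x 1 * octCross x y 6 - x 6 * octCross x y 1 + x 2 * octCross x y 5 - x 5 * octCross x y 2 := rfl
  have d5 : octCross x (octCross x y) 5 = -(x 0 * octCross x y 6) + x 6 * octCross x y 0 + x 1 * octCross x y 3 - x 3 * octCross x y 1 - x 2 * octCross x y 4 + x 4 * octCross x y 2 := rfl
  have d6 : octCross x (octCross x y) 6 = x 0 * octCross x y 5 - x 5 * octCross x y 0 - x 1 * octCross x y 4 + x 4 * octCross x y 1 - x 2 * octCross x y 3 + x 3 * octCross x y 2 := rfl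
  have e0 : octCross x (octCross x y) 0 = -(y 0) := by
    rw [d0]; simp only [c0, c1, c2, c3, c4, c5, c6]; linear_combination x 0 * h2 - y 0 * h1
  have e1 : octCross x (octCross x y) 1 = -(y 1) := by
    rw [d1]; simp only [c0, c1, c2, c3, c4, c5, c6]; linear_combination x 1 * h2 - y 1 * h1
  have e2 : octCross x (octCross x y) 2 = -(y 2) := by
    rw [d2]; simp only [c0, c1, c2, c3, c4, c5, c6]; linear_combination x 2 * h2 - y 2 * h1
  have e3 : octCross x (octCross x y) 3 = -(y 3) := by
    rw [d3]; simp only [c0, c1, c2, c3, c4, c5, c6]; linear_combination x 3 * h2 - y 3 * h1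
  have e4 : octCross x (octCross x y) 4 = -(y 4) := by
    rw [d4]; simp only [c0, c1, c2, c3, c4, c5, c6]; linear_combination x 4 * h2 - y 4 * h1
  have e5 : octCross x (octCross x y) 5 = -(y 5) := by
    rw [d5]; simp only [c0, c1, c2, c3, c4, c5, c6]; linear_combination x 5 * h2 - y 5 * h1
  have e6 : octCross x (octCross x y) 6 = -(y 6) := by
    rw [d6]; simp only [c0, c1, c2, c3, c4, c5, c6]; linear_combination x 6 * h2 - y 6 * h1
  funext i
  fin_cases i
  · exact e0
  · exact e1
  · exact e2
  · exact e3
  · exact e4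
  · exact e5
  · exact e6

/-- For purely imaginary octonions `x, y` with `|x| = 1` and `⟨x,y⟩ = 0`,
one has `x × (x × y) = -y`.  In particular, for every point `p` of the unit
sphere `S⁶` in the purely imaginary octonions, the map `J_p U = p × U`
satisfies `J_p² = -Id` on the orthogonal complement of `p`, i.e. it is an
almost complex structure on `T_p S⁶`. -/
theorem stmt_3 :
    (∀ x y : Fin 7 → ℝ, octDot x x = 1 → octDot x y = 0 →
      octCross x (octCross x y) = -y) ∧
    (∀ p : Fin 7 → ℝ, octDot p p = 1 →
      ∀ U : Fin 7 → ℝ, octDot p U = 0 →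
        octCross p (octCross p U) = -U) := by
  exact ⟨octCross_key, fun p hp U hU => octCross_key p U hp hU⟩
end

section
/- Let M be a 3-dimensional Riemannian manifold whose curvature tensor, with respect to a local orthonormal frame E₁, E₂, E₃, arises from the Gauss equation R(X,Y)Z = ⟨Y,Z⟩X - ⟨X,Z⟩Y + [A_{JX}, A_{JY}]Z, where the shape operators are determined by Jh(E₁,E₁) = aE₁, Jh(E₁,E₂) = -aE₂, Jh(E₂,E₂) = -aE₁, and Jh(E₁,E₃) = Jh(E₂,E₃) = Jh(E₃,E₃) = 0 with a ≠ 0 (and A_{JY}X = -Jh(X,Y)). Then the sectional curvature of the plane spanned by E₁ and E₂ equals 1 - 2a², the planes (E₁,E₃) and (E₂,E₃) have sectional curvature 1, the scalar curvature invariant τ = ΣᵢΣ_{j>i} K(Eᵢ∧Eⱼ) equals 3 - 2a², and the Chen invariant δ_M = τ - inf K equals 2. -/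
open scoped RealInnerProductSpace

/-- The curvature tensor of a minimal Lagrangian submanifold of `S⁶(1)` by
the Gauss equation: `R(X,Y)Z = ⟨Y,Z⟩X - ⟨X,Z⟩Y + [A_{JX},A_{JY}]Z` where
`A_{JY}X = -Jh(X,Y)`, so that `[A_{JX},A_{JY}]Z = Jh(X,Jh(Y,Z)) - Jh(Y,Jh(X,Z))`. -/
noncomputable def gaussR {V : Type*} [NormedAddCommGroup V] [InnerProductSpace ℝ V]
    (Jh : V →ₗ[ℝ] V →ₗ[ℝ] V) (X Y Z : V) : V :=
  ⟪Y, Z⟫ • X - ⟪X, Z⟫ • Y + Jh X (Jh Y Z) - Jh Y (Jh X Z)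

set_option maxHeartbeats 1000000 in
/-- With `Jh(E₁,E₁) = aE₁`, `Jh(E₁,E₂) = -aE₂`, `Jh(E₂,E₂) = -aE₁`,
`Jh(E₁,E₃) = Jh(E₂,E₃) = Jh(E₃,E₃) = 0`, `a ≠ 0`: the plane `(E₁,E₂)` has
sectional curvature `1 - 2a²`, the planes `(E₁,E₃)`, `(E₂,E₃)` have sectional
curvature `1`, the scalar curvature invariant `τ = Σ_{i<j} K(Eᵢ∧Eⱼ)` equals
`3 - 2a²`, and the Chen invariant `δ_M = τ - inf K` equals `2`. -/
theorem stmt_12 {V : Type*} [NormedAddCommGroup V] [InnerProductSpace ℝ V]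
    (b : OrthonormalBasis (Fin 3) ℝ V)
    (Jh : V →ₗ[ℝ] V →ₗ[ℝ] V) (hsymm : ∀ X Y : V, Jh X Y = Jh Y X)
    (a : ℝ) (ha : a ≠ 0)
    (h11 : Jh (b 0) (b 0) = a • b 0)
    (h12 : Jh (b 0) (b 1) = (-a) • b 1)
    (h22 : Jh (b 1) (b 1) = (-a) • b 0)
    (h13 : Jh (b 0) (b 2) = 0)
    (h23 : Jh (b 1) (b 2) = 0)
    (h33 : Jh (b 2) (b 2) = 0) :
    ⟪gaussR Jh (b 0) (b 1) (b 1), b 0⟫ = 1 - 2 * a ^ 2 ∧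
    ⟪gaussR Jh (b 0) (b 2) (b 2), b 0⟫ = 1 ∧
    ⟪gaussR Jh (b 1) (b 2) (b 2), b 1⟫ = 1 ∧
    (⟪gaussR Jh (b 0) (b 1) (b 1), b 0⟫ + ⟪gaussR Jh (b 0) (b 2) (b 2), b 0⟫ +
        ⟪gaussR Jh (b 1) (b 2) (b 2), b 1⟫) = 3 - 2 * a ^ 2 ∧
    (3 - 2 * a ^ 2) -
        sInf {k : ℝ | ∃ X Y : V, ‖X‖ = 1 ∧ ‖Y‖ = 1 ∧ ⟪X, Y⟫ = 0 ∧
          k = ⟪gaussR Jh X Y Y, X⟫} = 2 := by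
  have hb : ∀ i j : Fin 3, ⟪b i, b j⟫ = if i = j then (1:ℝ) else 0 :=
    orthonormal_iff_ite.mp b.orthonormal
  have h21 : Jh (b 1) (b 0) = (-a) • b 1 := (hsymm _ _).trans h12
  have h31 : Jh (b 2) (b 0) = 0 := (hsymm _ _).trans h13
  have h32 : Jh (b 2) (b 1) = 0 := (hsymm _ _).trans h23
  -- inner product in coordinates
  have Iexp : ∀ x0 x1 x2 y0 y1 y2 : ℝ,
      ⟪x0 • b 0 + x1 • b 1 + x2 • b 2, y0 • b 0 + y1 • b 1 + y2 • b 2⟫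
        = x0*y0 + x1*y1 + x2*y2 := by
    intro x0 x1 x2 y0 y1 y2
    simp [inner_add_left, inner_add_right, inner_smul_left, inner_smul_right, hb,
      Fin.ext_iff]
    ring
  -- sectional-curvature quantity in coordinates
  have Kexp : ∀ x0 x1 x2 y0 y1 y2 : ℝ,
      ⟪gaussR Jh (x0 • b 0 + x1 • b 1 + x2 • b 2) (y0 • b 0 + y1 • b 1 + y2 • b 2)
          (y0 • b 0 + y1 • b 1 + y2 • b 2), x0 • b 0 + x1 • b 1 + x2 • b 2⟫
        = (y0^2+y1^2+y2^2) * (x0^2+x1^2+x2^2) - (x0*y0+x1*y1+x2*y2)^2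
            + 2*a^2*((x0*y0+x1*y1)^2 - (x0^2+x1^2)*(y0^2+y1^2)) := by
    have Jexp : ∀ x0 x1 x2 y0 y1 y2 : ℝ,
        Jh (x0 • b 0 + x1 • b 1 + x2 • b 2) (y0 • b 0 + y1 • b 1 + y2 • b 2)
          = (a*(x0*y0 - x1*y1)) • b 0 + (-(a*(x0*y1 + x1*y0))) • b 1 + (0:ℝ) • b 2 := by
      intro x0 x1 x2 y0 y1 y2
      simp only [map_add, map_smul, LinearMap.add_apply, LinearMap.smul_apply,
        h11, h12, h13, h21, h22, h23, h31, h32, h33, smul_zero, add_zero, zero_smul]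
      module
    intro x0 x1 x2 y0 y1 y2
    rw [gaussR, Jexp y0 y1 y2 y0 y1 y2, Jexp x0 x1 x2 y0 y1 y2,
      Jexp x0 x1 x2 (a*(y0*y0 - y1*y1)) (-(a*(y0*y1 + y1*y0))) 0,
      Jexp y0 y1 y2 (a*(x0*y0 - x1*y1)) (-(a*(x0*y1 + x1*y0))) 0]
    simp only [inner_sub_left, inner_add_left, real_inner_smul_left, Iexp]
    ring
  -- the three basis sectional curvatures
  have K12 : ⟪gaussR Jh (b 0) (b 1) (b 1), b 0⟫ = 1 - 2 * a ^ 2 := by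
    have := Kexp 1 0 0 0 1 0
    simp at this; linarith
  have K13 : ⟪gaussR Jh (b 0) (b 2) (b 2), b 0⟫ = 1 := by
    have := Kexp 1 0 0 0 0 1
    simpa using this
  have K23 : ⟪gaussR Jh (b 1) (b 2) (b 2), b 1⟫ = 1 := by
    have := Kexp 0 1 0 0 0 1
    simpa using this
  refine ⟨K12, K13, K23, by rw [K12, K13, K23]; ring, ?_⟩
  -- the infimum
  set S : Set ℝ := {k : ℝ | ∃ X Y : V, ‖X‖ = 1 ∧ ‖Y‖ = 1 ∧ ⟪X, Y⟫ = 0 ∧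
      k = ⟪gaussR Jh X Y Y, X⟫} with hS
  have hmem : (1 - 2 * a ^ 2) ∈ S := by
    refine ⟨b 0, b 1, b.orthonormal.1 0, b.orthonormal.1 1, ?_, K12.symm⟩
    simpa using hb 0 1
  have hlb : ∀ k ∈ S, 1 - 2 * a ^ 2 ≤ k := by
    rintro k ⟨X, Y, hX, hY, hXY, rfl⟩
    have hXr : X = b.repr X 0 • b 0 + b.repr X 1 • b 1 + b.repr X 2 • b 2 := by
      have := b.sum_repr X
      rw [Fin.sum_univ_three] at this
      exact this.symm
    have hYr : Y = b.repr Y 0 • b 0 + b.repr Y 1 • b 1 + b.repr Y 2 • b 2 := by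
      have := b.sum_repr Y
      rw [Fin.sum_univ_three] at this
      exact this.symm
    set x0 := b.repr X 0; set x1 := b.repr X 1; set x2 := b.repr X 2
    set y0 := b.repr Y 0; set y1 := b.repr Y 1; set y2 := b.repr Y 2
    have hXX : x0^2 + x1^2 + x2^2 = 1 := by
      have h1 : ⟪X, X⟫ = 1 := by
        rw [real_inner_self_eq_norm_sq, hX]; norm_num
      rw [hXr] at h1
      rw [Iexp] at h1
      nlinarith [h1]
    have hYY : y0^2 + y1^2 + y2^2 = 1 := by
      have h1 : ⟪Y, Y⟫ = 1 := by
        rw [real_inner_self_eq_norm_sq, hY]; norm_num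
      rw [hYr] at h1
      rw [Iexp] at h1
      nlinarith [h1]
    have hO : x0*y0 + x1*y1 + x2*y2 = 0 := by
      rw [hXr, hYr, Iexp] at hXY
      exact hXY
    have hprod : (x0^2+x1^2+x2^2)*(y0^2+y1^2+y2^2) = 1 := by rw [hXX, hYY]; norm_num
    have hid2 : 2*a^2*(1 + (x0*y0+x1*y1)^2 - (x0^2+x1^2)*(y0^2+y1^2))
        = 2*((a*(x0*y0+x1*y1))^2 + (a*y2*x0)^2 + (a*y2*x1)^2 + (a*x2*y0)^2
            + (a*x2*y1)^2 + (a*x2*y2)^2) := by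
      linear_combination (-(2*a^2))*hprod
    rw [hXr, hYr, Kexp, hXX, hYY, hO]
    nlinarith [hid2, sq_nonneg (a*(x0*y0+x1*y1)), sq_nonneg (a*y2*x0), sq_nonneg (a*y2*x1),
      sq_nonneg (a*x2*y0), sq_nonneg (a*x2*y1), sq_nonneg (a*x2*y2)]
  have hInf : sInf S = 1 - 2 * a ^ 2 := by
    apply le_antisymm
    · exact csInf_le ⟨1 - 2 * a ^ 2, fun k hk => hlb k hk⟩ hmem
    · exact le_csInf ⟨_, hmem⟩ hlb
  rw [hInf]; ring
end

section
/- The multiplication table cross product on span{e₁,...,e₇} ⊂ ℝ⁷ satisfies |x × y|² = |x|²|y|² - ⟨x,y⟩² for all x, y; equivalently, for orthonormal x, y the vector x × y is a unit vector orthogonal to both. -/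

private lemma oc0 (x y : Fin 7 → ℝ) : octCross x y 0 = x 1 * y 2 - x 2 * y 1 + x 3 * y 4 - x 4 * y 3 + x 5 * y 6 - x 6 * y 5 := rfl
private lemma oc1 (x y : Fin 7 → ℝ) : octCross x y 1 = -(x 0 * y 2) + x 2 * y 0 + x 3 * y 5 - x 5 * y 3 - x 4 * y 6 + x 6 * y 4 := rfl
private lemma oc2 (x y : Fin 7 → ℝ) : octCross x y 2 = x 0 * y 1 - x 1 * y 0 - x 3 * y 6 + x 6 * y 3 - x 4 * y 5 + x 5 * y 4 := rfl
private lemma oc3 (x y : Fin 7 → ℝ) : octCross x y 3 = -(x 0 * y 4) + x 4 * y 0 - x 1 * y 5 + x 5 * y 1 + x 2 * y 6 - x 6 * y 2 := rfl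
private lemma oc4 (x y : Fin 7 → ℝ) : octCross x y 4 = x 0 * y 3 - x 3 * y 0 + x 1 * y 6 - x 6 * y 1 + x 2 * y 5 - x 5 * y 2 := rfl
private lemma oc5 (x y : Fin 7 → ℝ) : octCross x y 5 = -(x 0 * y 6) + x 6 * y 0 + x 1 * y 3 - x 3 * y 1 - x 2 * y 4 + x 4 * y 2 := rfl
private lemma oc6 (x y : Fin 7 → ℝ) : octCross x y 6 = x 0 * y 5 - x 5 * y 0 - x 1 * y 4 + x 4 * y 1 - x 2 * y 3 + x 3 * y 2 := rfl

/-- The multiplication-table cross product on `span{e₁,…,e₇} ⊂ ℝ⁷` satisfies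
`|x × y|² = |x|²|y|² - ⟨x,y⟩²`; in particular, for orthonormal `x, y` the
vector `x × y` is a unit vector orthogonal to both. -/
theorem stmt_19 :
    (∀ x y : Fin 7 → ℝ,
      octDot (octCross x y) (octCross x y) = octDot x x * octDot y y - (octDot x y) ^ 2) ∧
    (∀ x y : Fin 7 → ℝ, octDot x x = 1 → octDot y y = 1 → octDot x y = 0 →
      octDot (octCross x y) (octCross x y) = 1 ∧
      octDot (octCross x y) x = 0 ∧ octDot (octCross x y) y = 0) := by
  have key : ∀ x y : Fin 7 → ℝ,
      octDot (octCross x y) (octCross x y) = octDot x x * octDot y y - (octDot x y) ^ 2 := by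
    intro x y
    simp only [octDot, Fin.sum_univ_seven, oc0, oc1, oc2, oc3, oc4, oc5, oc6]
    ring
  have ox : ∀ x y : Fin 7 → ℝ, octDot (octCross x y) x = 0 := by
    intro x y
    simp only [octDot, Fin.sum_univ_seven, oc0, oc1, oc2, oc3, oc4, oc5, oc6]
    ring
  have oy : ∀ x y : Fin 7 → ℝ, octDot (octCross x y) y = 0 := by
    intro x y
    simp only [octDot, Fin.sum_univ_seven, oc0, oc1, oc2, oc3, oc4, oc5, oc6]
    ring
  refine ⟨key, fun x y hx hy hxy => ⟨?_, ox x y, oy x y⟩⟩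
  rw [key, hx, hy, hxy]; norm_num
end
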